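/- Let A be a Krull-Schmidt category, B ⊆ A closed under retracts, and x ∈ A an object having no direct summand in B. If the image of x in the additive quotient A/B is indecomposable, then x is indecomposable in A. -/

import Mathlib

open CategoryTheory CategoryTheory.Limits ZeroObject

namespace Stmt8

variable {A : Type*} [Category A] [Preadditive A] [HasZeroObject A]
  [HasBinaryBiproducts A] [HasFiniteBiproducts A]

/-- A morphism factors through an object belonging to the class `B`. -/
def FactorsThru (B : Set A) {x y : A} (f : x ⟶ y) : Prop :=
  ∃ (b : A) (g : x ⟶ b) (h : b ⟶ y), b ∈ B ∧ g ≫ h = f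

theorem factorsThru_add {B : Set A}
    (hB : ∀ {b b' : A}, b ∈ B → b' ∈ B → (b ⊞ b') ∈ B)
    {x y : A} {f g : x ⟶ y} (hf : FactorsThru B f) (hg : FactorsThru B g) :
    FactorsThru B (f + g) := by
  obtain ⟨b, p, q, hb, hpq⟩ := hf
  obtain ⟨b', p', q', hb', hpq'⟩ := hg
  exact ⟨b ⊞ b', biprod.lift p p', biprod.desc q q', hB hb hb', by
    rw [biprod.lift_desc, hpq, hpq']⟩

/-- A (nonempty) full additive subcategory of `A`, given by its class of objects,
closed under finite direct sums. -/
structure AdditiveSubcat (A : Type*) [Category A] [Preadditive A]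
    [HasBinaryBiproducts A] where
  carrier : Set A
  nonempty : carrier.Nonempty
  biprod_mem : ∀ {b b' : A}, b ∈ carrier → b' ∈ carrier → (b ⊞ b') ∈ carrier

variable (S : AdditiveSubcat A)

/-- The hom relation defining the additive quotient `A/B`: two morphisms are
identified when their difference factors through an object of `B`. -/
def AdditiveSubcat.rel (S : AdditiveSubcat A) : HomRel A :=
  fun _ _ f g => FactorsThru S.carrier (f - g)

instance : Congruence S.rel where
  equivalence := by
    refine ⟨fun f => ?_, fun {f g} h => ?_, fun {f g h} h1 h2 => ?_⟩
    · obtain ⟨b, hb⟩ := S.nonempty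
      exact ⟨b, 0, 0, hb, by simp⟩
    · obtain ⟨b, p, q, hb, hpq⟩ := h
      exact ⟨b, -p, q, hb, by rw [Preadditive.neg_comp, hpq, neg_sub]⟩
    · have := factorsThru_add S.biprod_mem h1 h2
      rwa [sub_add_sub_cancel] at this
  comp_left := by
    rintro X Y Z f g g' ⟨b, p, q, hb, hpq⟩
    exact ⟨b, f ≫ p, q, hb, by rw [Category.assoc, hpq, Preadditive.comp_sub]⟩
  comp_right := by
    rintro X Y Z f f' g ⟨b, p, q, hb, hpq⟩
    exact ⟨b, p, q ≫ g, hb, by rw [← Category.assoc, hpq, Preadditive.sub_comp]⟩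

/-- The additive quotient category `A/B` is preadditive. -/
instance : Preadditive (CategoryTheory.Quotient S.rel) :=
  CategoryTheory.Quotient.preadditive S.rel (by
    intro X Y f₁ f₂ g₁ g₂ h1 h2
    have := factorsThru_add S.biprod_mem h1 h2
    rwa [show (f₁ - f₂) + (g₁ - g₂) = (f₁ + g₁) - (f₂ + g₂) by abel] at this)

/-- An additive category is Krull-Schmidt if every object is a finite direct sum of
objects with local endomorphism rings. -/
def KrullSchmidt (A : Type*) [Category A] [Preadditive A] [HasFiniteBiproducts A] : Prop :=
  ∀ x : A, ∃ (n : ℕ) (f : Fin n → A),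
    (∀ i, IsLocalRing (End (f i))) ∧ Nonempty (x ≅ ⨁ f)


/-- An object is indecomposable: nonzero and admitting no nontrivial direct sum
decomposition. -/
def Indec (x : A) : Prop :=
  ¬ IsZero x ∧ ∀ y z : A, Nonempty (x ≅ y ⊞ z) → IsZero y ∨ IsZero z

/-- An object of the additive quotient `A/B` is indecomposable: nonzero and admitting
no nontrivial direct sum decomposition (direct sums in the quotient being the images of
the direct sums of `A` under the quotient functor, which is additive, full and
essentially surjective). -/
def IndecQ (S : AdditiveSubcat A) (q : CategoryTheory.Quotient S.rel) : Prop :=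
  ¬ IsZero q ∧ ∀ y z : A,
    Nonempty (q ≅ (CategoryTheory.Quotient.functor S.rel).obj (y ⊞ z)) →
      IsZero ((CategoryTheory.Quotient.functor S.rel).obj y) ∨
        IsZero ((CategoryTheory.Quotient.functor S.rel).obj z)

/-- Let `A` be Krull-Schmidt, `B ⊆ A` closed under retracts, and `x` an object with no
nonzero direct summand in `B`. If the image of `x` in the additive quotient `A/B` is
indecomposable, then `x` is indecomposable in `A`. -/
theorem indec_of_indec_in_quotient (hKS : KrullSchmidt A)
    (hretract : ∀ {b c : A}, b ∈ S.carrier →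
      ∀ (s : c ⟶ b) (r : b ⟶ c), s ≫ r = 𝟙 c → c ∈ S.carrier)
    (x : A)
    (hnosummand : ∀ b ∈ S.carrier,
      (∃ (s : b ⟶ x) (r : x ⟶ b), s ≫ r = 𝟙 b) → IsZero b)
    (hq : IndecQ S ((CategoryTheory.Quotient.functor S.rel).obj x)) :
    Indec x := by
  set Q := CategoryTheory.Quotient.functor S.rel with hQ
  -- key: if Q.obj y is zero and y is a retract of x, then y is zero
  have key : ∀ (y : A), IsZero (Q.obj y) →
      (∃ (s : y ⟶ x) (r : x ⟶ y), s ≫ r = 𝟙 y) → IsZero y := by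
    intro y hz hs
    have h1 : Q.map (𝟙 y) = Q.map (0 : y ⟶ y) := by
      have : (𝟙 (Q.obj y) : Q.obj y ⟶ Q.obj y) = 0 := hz.eq_of_src _ _
      simpa using this
    rw [CategoryTheory.Quotient.functor_map_eq_iff] at h1
    obtain ⟨b, p, q, hb, hpq⟩ := h1
    rw [sub_zero] at hpq
    exact hnosummand y (hretract hb p q hpq) hs
  constructor
  · intro hx
    apply hq.1
    have : Q.map (𝟙 x) = Q.map (0 : x ⟶ x) := by
      rw [hx.eq_of_src (𝟙 x) 0]
    rw [IsZero.iff_id_eq_zero]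
    calc 𝟙 (Q.obj x) = Q.map (𝟙 x) := rfl
      _ = Q.map (0 : x ⟶ x) := this
      _ = 0 := rfl
  · intro y z ⟨e⟩
    rcases hq.2 y z ⟨Q.mapIso e⟩ with h | h
    · exact Or.inl (key y h ⟨biprod.inl ≫ e.inv, e.hom ≫ biprod.fst, by
        simp⟩)
    · exact Or.inr (key z h ⟨biprod.inr ≫ e.inv, e.hom ≫ biprod.snd, by
        simp⟩)

end Stmt8
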